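/- If G is a graph with treewidth at least 3 and v is a vertex of degree 2 in G, then suppressing v (deleting v and adding an edge between its two neighbors if not already present) does not change the treewidth of G. -/

import Mathlib

open SimpleGraph

/-- The ladder of length `k`: the `2 × (k+1)` grid graph. -/
def ladder (k : ℕ) : SimpleGraph (Fin 2 × Fin (k + 1)) :=
  SimpleGraph.fromRel fun p q =>
    (p.1 = q.1 ∧ p.2.val + 1 = q.2.val) ∨ (p.2 = q.2 ∧ p.1 ≠ q.1)

/-- `G` contains a ladder of length `k`: an induced copy of the `2 × (k+1)` grid,
attached to the rest of `G` only via its four cornerpoints (the vertices in columns `0` and `k`). -/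
structure ContainsLadder {V : Type} (G : SimpleGraph V) (k : ℕ) where
  f : Fin 2 × Fin (k + 1) → V
  inj : Function.Injective f
  induced : ∀ p q, G.Adj (f p) (f q) ↔ (ladder k).Adj p q
  attach : ∀ p : Fin 2 × Fin (k + 1), p.2.val ≠ 0 → p.2.val ≠ k →
    ∀ v : V, G.Adj (f p) v → v ∈ Set.range f

/-- The two horizontal edges of square `i` of the ladder form an edge cut of `G`. -/
def ContainsLadder.SquareCut {V : Type} {G : SimpleGraph V} {k : ℕ}
    (L : ContainsLadder G k) (i : Fin k) : Prop :=
  ¬ (G.deleteEdges {s(L.f (0, i.castSucc), L.f (0, i.succ)),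
      s(L.f (1, i.castSucc), L.f (1, i.succ))}).Connected

/-- The ladder is disconnecting: the horizontal edges of some square form an edge cut. -/
def ContainsLadder.Disconnects {V : Type} {G : SimpleGraph V} {k : ℕ}
    (L : ContainsLadder G k) : Prop :=
  ∃ i : Fin k, L.SquareCut i

/-- A tree decomposition of a graph. -/
structure TreeDecomp {V : Type} (G : SimpleGraph V) where
  ι : Type
  [fin : Fintype ι]
  tree : SimpleGraph ι
  isTree : tree.IsTree
  bag : ι → Finset V
  cover_vertex : ∀ v : V, ∃ i, v ∈ bag i
  cover_edge : ∀ ⦃u v : V⦄, G.Adj u v → ∃ i, u ∈ bag i ∧ v ∈ bag i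
  bag_connected : ∀ v : V, (tree.induce {i | v ∈ bag i}).Connected

/-- The width of a tree decomposition: maximum bag size minus one. -/
def TreeDecomp.width {V : Type} {G : SimpleGraph V} (td : TreeDecomp G) : ℕ :=
  letI := td.fin
  (Finset.univ.sup fun i => (td.bag i).card) - 1

/-- The treewidth of a graph: minimum width over all tree decompositions. -/
noncomputable def treewidth {V : Type} (G : SimpleGraph V) : ℕ :=
  sInf (Set.range fun td : TreeDecomp G => td.width)

/-- `H` is a minor of `G`: witnessed by pairwise disjoint nonempty connected branch sets. -/
def IsMinor {W V : Type} (H : SimpleGraph W) (G : SimpleGraph V) : Prop :=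
  ∃ φ : W → Set V, (∀ w, (φ w).Nonempty) ∧ (∀ w, (G.induce (φ w)).Connected) ∧
    (∀ w w', w ≠ w' → Disjoint (φ w) (φ w')) ∧
    (∀ w w', H.Adj w w' → ∃ u ∈ φ w, ∃ v ∈ φ w', G.Adj u v)

/-- Lengthen the ladder `L` by `m` squares, by inserting `m` new rungs between
columns `0` and `1` (subdividing the two horizontal edges and adding rungs). -/
def extendLadder {V : Type} (G : SimpleGraph V) {k : ℕ} (L : ContainsLadder G k) (m : ℕ) :
    SimpleGraph (V ⊕ (Fin 2 × Fin m)) :=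
  SimpleGraph.fromRel fun p q =>
    (∃ u v : V, p = Sum.inl u ∧ q = Sum.inl v ∧ G.Adj u v ∧
      (m ≠ 0 → ∀ a : Fin 2, s(u, v) ≠ s(L.f (a, 0), L.f (a, 1)))) ∨
    (∃ (a : Fin 2) (j : Fin m), j.val = 0 ∧ p = Sum.inl (L.f (a, 0)) ∧ q = Sum.inr (a, j)) ∨
    (∃ (a : Fin 2) (j : Fin m), j.val = m - 1 ∧ p = Sum.inr (a, j) ∧ q = Sum.inl (L.f (a, 1))) ∨
    (∃ (a : Fin 2) (j j' : Fin m), j.val + 1 = j'.val ∧ p = Sum.inr (a, j) ∧ q = Sum.inr (a, j')) ∨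
    (∃ (a b : Fin 2) (j : Fin m), a ≠ b ∧ p = Sum.inr (a, j) ∧ q = Sum.inr (b, j))

/-- Insert one new rung into square `i` of the ladder `L`: two new vertices `inr 0, inr 1`
subdividing the horizontal edges of square `i`, joined by an edge. -/
def insertRung {V : Type} (G : SimpleGraph V) {k : ℕ} (L : ContainsLadder G k) (i : Fin k) :
    SimpleGraph (V ⊕ Fin 2) :=
  SimpleGraph.fromRel fun p q =>
    (∃ u v : V, p = Sum.inl u ∧ q = Sum.inl v ∧ G.Adj u v ∧
      ∀ a : Fin 2, s(u, v) ≠ s(L.f (a, i.castSucc), L.f (a, i.succ))) ∨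
    (∃ a : Fin 2, p = Sum.inl (L.f (a, i.castSucc)) ∧ q = Sum.inr a) ∨
    (∃ a : Fin 2, p = Sum.inr a ∧ q = Sum.inl (L.f (a, i.succ))) ∨
    (p = Sum.inr (0 : Fin 2) ∧ q = Sum.inr (1 : Fin 2))

/-- Contract the edge `{u, v}` of `G`: merge `v` into `u`. -/
def contractEdge {V : Type} (G : SimpleGraph V) (u v : V) : SimpleGraph {x : V // x ≠ v} :=
  SimpleGraph.fromRel fun x y =>
    G.Adj x.val y.val ∨ (x.val = u ∧ G.Adj v y.val) ∨ (y.val = u ∧ G.Adj x.val v)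

/-- Subdivide the edge `{u, v}` of `G` with a new vertex. -/
def subdivide {V : Type} (G : SimpleGraph V) (u v : V) : SimpleGraph (V ⊕ Unit) :=
  SimpleGraph.fromRel fun p q =>
    (∃ x y : V, p = Sum.inl x ∧ q = Sum.inl y ∧ G.Adj x y ∧ s(x, y) ≠ s(u, v)) ∨
    (p = Sum.inl u ∧ q = Sum.inr ()) ∨ (p = Sum.inl v ∧ q = Sum.inr ())

/-- Suppress the degree-2 vertex `v` with neighbours `a` and `b`:
delete `v` and add the edge `{a, b}` (if not already present). -/
def suppress {V : Type} (G : SimpleGraph V) (v a b : V) : SimpleGraph {x : V // x ≠ v} :=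
  SimpleGraph.fromRel fun x y =>
    G.Adj x.val y.val ∨ (x.val = a ∧ y.val = b)

/-- A graph is chordal if every cycle on at least 4 vertices has a chord. -/
def IsChordal {V : Type} (G : SimpleGraph V) : Prop :=
  ∀ n : ℕ, ∀ f : Fin (n + 4) → V, Function.Injective f →
    (∀ i : Fin (n + 4), G.Adj (f i) (f (i + 1))) →
    ∃ i j : Fin (n + 4), i ≠ j ∧ j ≠ i + 1 ∧ i ≠ j + 1 ∧ G.Adj (f i) (f j)

/-- The induced subgraph on `S` has no cutvertex. -/
def NoCutvertex {V : Type} (G : SimpleGraph V) (S : Set V) : Prop :=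
  ∀ v ∈ S, ∀ x y : ↥(S \ {v}), (G.induce (S \ {v})).Reachable x y

/-- `S` is a block (biconnected component) of `G`: a maximal connected
vertex set without a cutvertex. -/
def IsBlock {V : Type} (G : SimpleGraph V) (S : Set V) : Prop :=
  S.Nonempty ∧ (G.induce S).Connected ∧ NoCutvertex G S ∧
  ∀ T : Set V, S ⊆ T → (G.induce T).Connected → NoCutvertex G T → T = S

/-!
Suppressing `v` is contracting the edge `va` (the edge `ab` of the result comes from `vb`), so
pushing every bag forward along the contraction turns a tree decomposition of `G` into one of the
suppressed graph of no larger width. Conversely, some bag of a decomposition of the suppressed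
graph contains the edge `ab`; hanging a new leaf bag `{v, a, b}` off it yields a decomposition of
`G` of width at most `max 2 w`. Once `tw G ≥ 3`, the `2` plays no role and the widths agree.
-/

namespace SimpleGraph

theorem IsTree.sum_sup_edge {V W : Type*} [Finite V] [Finite W] {G : SimpleGraph V}
    {H : SimpleGraph W} (hG : G.IsTree) (hH : H.IsTree) (v : V) (w : W) :
    (G.sum H ⊔ edge (.inl v) (.inr w)).IsTree := by
  rw [isTree_iff_connected_and_card] at hG hH ⊢
  refine ⟨hG.1.sum_sup_edge hH.1, ?_⟩
  have hnew : s(Sum.inl v, Sum.inr w) ∉ (G ⊕g H).edgeSet :=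
    not_adj_sum_inl_inr (G := G) (H := H) v w
  rw [edgeSet_sup, edgeSet_edge_of_ne Sum.inl_ne_inr, Set.union_comm,
    ← Set.insert_eq, Nat.card_coe_set_eq, Set.ncard_insert_of_notMem hnew,
    ← Nat.card_coe_set_eq, Nat.card_congr edgeSetSumEquiv, Nat.card_sum, Nat.card_sum]
  omega

theorem induce_image_connected {V W : Type*} {G : SimpleGraph V} {H : SimpleGraph W}
    (φ : G →g H) {s : Set V} (hs : (G.induce s).Connected) : (H.induce (φ '' s)).Connected :=
  hs.map (induceHom φ (Set.mapsTo_image φ s)) (by rintro ⟨_, x, hx, rfl⟩; exact ⟨⟨x, hx⟩, rfl⟩)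

theorem induce_singleton_connected {V : Type*} (G : SimpleGraph V) (v : V) :
    (G.induce {v}).Connected :=
  Connected.of_subsingleton

end SimpleGraph

namespace TreeDecomp

variable {V : Type} {G : SimpleGraph V}

theorem card_bag_le_width_add_one (td : TreeDecomp G) (i : td.ι) :
    (td.bag i).card ≤ td.width + 1 := by
  let := td.fin
  have := Finset.le_sup (f := fun i => (td.bag i).card) (Finset.mem_univ i)
  unfold width
  omega

theorem width_le_of_card_bag_le (td : TreeDecomp G) {n : ℕ}
    (h : ∀ i, (td.bag i).card ≤ n + 1) : td.width ≤ n := by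
  let := td.fin
  have := Finset.sup_le (s := Finset.univ) fun i _ => h i
  unfold width
  omega

theorem connected_induce_bags_meeting (td : TreeDecomp G) {S : Set V}
    (hS : (G.induce S).Connected) :
    (td.tree.induce {i | ∃ u ∈ S, u ∈ td.bag i}).Connected := by
  set X := {i | ∃ u ∈ S, u ∈ td.bag i}
  have hsub : ∀ {u}, u ∈ S → {i | u ∈ td.bag i} ⊆ X := fun hu _ hi => ⟨_, hu, hi⟩
  have within : ∀ {u} (hu : u ∈ S) {i j} (hi : u ∈ td.bag i) (hj : u ∈ td.bag j),
      (td.tree.induce X).Reachable ⟨i, u, hu, hi⟩ ⟨j, u, hu, hj⟩ := fun hu _ _ hi hj =>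
    ((td.bag_connected _).preconnected ⟨_, hi⟩ ⟨_, hj⟩).map (induceHomOfLE _ (hsub hu)).toHom
  have along : ∀ {u w : S} (p : (G.induce S).Walk u w) {i j} (hi : u.1 ∈ td.bag i)
      (hj : w.1 ∈ td.bag j), (td.tree.induce X).Reachable ⟨i, u, u.2, hi⟩ ⟨j, w, w.2, hj⟩ := by
    intro u w p
    induction p with
    | nil => exact within (Subtype.prop _)
    | cons h p ih =>
      intro i j hi hj
      obtain ⟨k, hku, hkz⟩ := td.cover_edge h
      exact (within (Subtype.prop _) hi hku).trans (ih hkz hj)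
  obtain ⟨u⟩ := hS.nonempty
  obtain ⟨i, hi⟩ := td.cover_vertex u
  rw [connected_iff_exists_forall_reachable]
  refine ⟨⟨i, u, u.2, hi⟩, ?_⟩
  rintro ⟨j, w, hw, hj⟩
  exact along (hS.preconnected u ⟨w, hw⟩).some hi hj

/-- `H` is a minor of `G` whose branch sets are the fibres of `f`. -/
noncomputable def map (td : TreeDecomp G) {W : Type} {H : SimpleGraph W} (f : V → W)
    (hfib : ∀ x, (G.induce (f ⁻¹' {x})).Connected)
    (hlift : ∀ ⦃x y⦄, H.Adj x y → ∃ u w, f u = x ∧ f w = y ∧ G.Adj u w) : TreeDecomp H := by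
  classical
  exact
  { ι := td.ι
    fin := td.fin
    tree := td.tree
    isTree := td.isTree
    bag := fun i => (td.bag i).image f
    cover_vertex := fun x => by
      obtain ⟨⟨u, hu⟩⟩ := (hfib x).nonempty
      obtain ⟨i, hi⟩ := td.cover_vertex u
      exact ⟨i, Finset.mem_image.2 ⟨u, hi, hu⟩⟩
    cover_edge := fun x y hxy => by
      obtain ⟨u, w, rfl, rfl, huw⟩ := hlift hxy
      obtain ⟨i, hu, hw⟩ := td.cover_edge huw
      exact ⟨i, Finset.mem_image_of_mem f hu, Finset.mem_image_of_mem f hw⟩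
    bag_connected := fun x => by
      have hX : {i | x ∈ (td.bag i).image f} = {i | ∃ u ∈ f ⁻¹' {x}, u ∈ td.bag i} := by
        ext i
        simp [and_comm]
      exact hX ▸ td.connected_induce_bags_meeting (hfib x) }

theorem width_map_le (td : TreeDecomp G) {W : Type} {H : SimpleGraph W} (f : V → W)
    (hfib : ∀ x, (G.induce (f ⁻¹' {x})).Connected)
    (hlift : ∀ ⦃x y⦄, H.Adj x y → ∃ u w, f u = x ∧ f w = y ∧ G.Adj u w) :
    (td.map f hfib hlift).width ≤ td.width := by
  classical
  exact width_le_of_card_bag_le _ fun i =>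
    Finset.card_image_le.trans (td.card_bag_le_width_add_one i)

section AddLeaf

variable {v : V} {H : SimpleGraph {x // x ≠ v}} (td : TreeDecomp H) (i₀ : td.ι)

def leafTree : SimpleGraph (td.ι ⊕ Unit) :=
  td.tree.sum ⊥ ⊔ edge (.inl i₀) (.inr ())

theorem isTree_leafTree : (td.leafTree i₀).IsTree :=
  have := td.fin
  td.isTree.sum_sup_edge .of_subsingleton i₀ ()

variable [DecidableEq V] (s : Finset {x // x ≠ v})

def leafBag : td.ι ⊕ Unit → Finset V
  | .inl i => (td.bag i).map (Function.Embedding.subtype _)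
  | .inr _ => insert v (s.map (Function.Embedding.subtype _))

@[simp] theorem mem_leafBag_inl {x : V} {i : td.ι} :
    x ∈ td.leafBag s (.inl i) ↔ ∃ hx : x ≠ v, ⟨x, hx⟩ ∈ td.bag i := by
  simp [leafBag]

@[simp] theorem mem_leafBag_inr {x : V} {u : Unit} :
    x ∈ td.leafBag s (.inr u) ↔ x = v ∨ ∃ hx : x ≠ v, ⟨x, hx⟩ ∈ s := by
  simp [leafBag]

theorem leafBag_connected (hs : s ⊆ td.bag i₀) (x : V) :
    ((td.leafTree i₀).induce {k | x ∈ td.leafBag s k}).Connected := by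
  by_cases hx : x = v
  · have hX : {k | x ∈ td.leafBag s k} = {.inr ()} := by
      ext (i | ⟨⟩) <;> simp [hx]
    exact hX ▸ induce_singleton_connected _ _
  let x' : {x // x ≠ v} := ⟨x, hx⟩
  let φ : td.tree →g td.leafTree i₀ := ⟨Sum.inl, fun h => Or.inl (by simpa using h)⟩
  have hφ_apply : ∀ i, φ i = .inl i := fun _ => rfl
  have hφ := induce_image_connected φ (td.bag_connected x')
  by_cases hxs : x' ∈ s
  · have hX : {k | x ∈ td.leafBag s k} = φ '' {i | x' ∈ td.bag i} ∪ {.inr ()} := by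
      ext (i | ⟨⟩) <;> simp [hx, hxs, hφ_apply, x']
    rw [hX]
    exact connected_induce_union hφ.preconnected (induce_singleton_connected _ _).preconnected
      ⟨i₀, hs hxs, rfl⟩ rfl
      (show (td.leafTree i₀).Adj (.inl i₀) (.inr ()) by simp [leafTree, edge_adj])
  · have hX : {k | x ∈ td.leafBag s k} = φ '' {i | x' ∈ td.bag i} := by
      ext (i | ⟨⟩) <;> simp [hx, hxs, hφ_apply, x']
    exact hX ▸ hφ

variable (hs : s ⊆ td.bag i₀)

/-- The neighbours `s` of `v` lie in the bag of `i₀`, so a new leaf bag `insert v s` attached to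
`i₀` covers the edges at `v`. -/
def addLeaf (hGH : ∀ x y : {x // x ≠ v}, G.Adj x y → H.Adj x y)
    (hN : ∀ x : {x // x ≠ v}, G.Adj v x → x ∈ s) : TreeDecomp G where
  ι := td.ι ⊕ Unit
  fin := have := td.fin; inferInstance
  tree := td.leafTree i₀
  isTree := td.isTree_leafTree i₀
  bag := td.leafBag s
  cover_vertex x := by
    by_cases hx : x = v
    · exact ⟨.inr (), by simp [hx]⟩
    · obtain ⟨i, hi⟩ := td.cover_vertex ⟨x, hx⟩
      exact ⟨.inl i, by simpa [hx] using hi⟩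
  cover_edge x y hxy := by
    by_cases hx : x = v
    · subst hx
      exact ⟨.inr (), by simp, by simpa [hxy.ne'] using hN ⟨y, hxy.ne'⟩ hxy⟩
    by_cases hy : y = v
    · subst hy
      exact ⟨.inr (), by simpa [hxy.ne] using hN ⟨x, hxy.ne⟩ hxy.symm, by simp⟩
    obtain ⟨i, hi, hj⟩ := td.cover_edge (hGH ⟨x, hx⟩ ⟨y, hy⟩ hxy)
    exact ⟨.inl i, by simpa [hx] using hi, by simpa [hy] using hj⟩
  bag_connected := td.leafBag_connected i₀ s hs

theorem width_addLeaf_le (hGH : ∀ x y : {x // x ≠ v}, G.Adj x y → H.Adj x y)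
    (hN : ∀ x : {x // x ≠ v}, G.Adj v x → x ∈ s) :
    (td.addLeaf i₀ s hs hGH hN).width ≤ max s.card td.width :=
  width_le_of_card_bag_le _ fun
    | .inl i => by
      simpa [addLeaf, leafBag] using (td.card_bag_le_width_add_one i).trans (by omega)
    | .inr _ => (Finset.card_insert_le _ _).trans (by simp)

end AddLeaf

end TreeDecomp

section Treewidth

variable {V : Type} {G : SimpleGraph V}

theorem treewidth_le_width (td : TreeDecomp G) : treewidth G ≤ td.width :=
  Nat.sInf_le ⟨td, rfl⟩

theorem exists_width_eq_treewidth [Nonempty (TreeDecomp G)] :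
    ∃ td : TreeDecomp G, td.width = treewidth G :=
  Nat.sInf_mem (Set.range_nonempty _)

/-- Without tree decompositions (e.g. for infinite `V`) the treewidth is `sInf ∅ = 0`. -/
theorem nonempty_treeDecomp_of_treewidth_ne_zero (h : treewidth G ≠ 0) :
    Nonempty (TreeDecomp G) := by
  by_contra hG
  rw [not_nonempty_iff] at hG
  exact h (by simp [treewidth, Set.range_eq_empty])

end Treewidth

section Suppress

variable {V : Type} {G : SimpleGraph V} {v a b : V}

theorem adj_iff_of_neighborSet_eq_pair (hdeg : G.neighborSet v = {a, b}) (x : V) :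
    G.Adj v x ↔ x = a ∨ x = b := by
  rw [← mem_neighborSet, hdeg]
  rfl

/-- Contracts the edge `va` onto `a`. -/
noncomputable def mergeInto (hav : a ≠ v) (x : V) : {x // x ≠ v} :=
  open Classical in if hx : x = v then ⟨a, hav⟩ else ⟨x, hx⟩

theorem mergeInto_eq_iff (hav : a ≠ v) {x : V} {y : {x // x ≠ v}} :
    mergeInto hav x = y ↔ x = y ∨ (x = v ∧ a = y) := by
  obtain ⟨y, hy⟩ := y
  by_cases hx : x = v <;> simp [mergeInto, hx, Ne.symm hy]

theorem connected_induce_preimage_mergeInto (hva : G.Adj v a) (y : {x // x ≠ v}) :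
    (G.induce (mergeInto hva.ne' ⁻¹' {y})).Connected := by
  by_cases hy : a = y
  · have hfib : mergeInto hva.ne' ⁻¹' {y} = {v, a} := by
      ext x
      simp only [Set.mem_preimage, Set.mem_singleton_iff, mergeInto_eq_iff, hy,
        Set.mem_insert_iff]
      tauto
    exact hfib ▸ induce_pair_connected_of_adj hva
  · have hfib : mergeInto hva.ne' ⁻¹' {y} = {y.1} := by
      ext x
      simp [mergeInto_eq_iff, hy]
    exact hfib ▸ induce_singleton_connected _ _

theorem TreeDecomp.exists_width_le_suppress (td : TreeDecomp G) (hva : G.Adj v a)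
    (hvb : G.Adj v b) : ∃ td' : TreeDecomp (suppress G v a b), td'.width ≤ td.width := by
  refine ⟨td.map (mergeInto hva.ne') (connected_induce_preimage_mergeInto hva) ?_,
    td.width_map_le _ _ _⟩
  intro x y hxy
  have hmerge : ∀ z : {x // x ≠ v}, mergeInto hva.ne' z = z := fun z => by
    simp [mergeInto_eq_iff]
  have hmerge_v : mergeInto hva.ne' v = ⟨a, hva.ne'⟩ := by simp [mergeInto]
  rw [suppress, fromRel_adj] at hxy
  obtain ⟨-, (hG | ⟨hx, hy⟩) | (hG | ⟨hy, hx⟩)⟩ := hxy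
  · exact ⟨x, y, hmerge x, hmerge y, hG⟩
  · exact ⟨v, y, by rw [hmerge_v]; ext; exact hx.symm, hmerge y, hy ▸ hvb⟩
  · exact ⟨x, y, hmerge x, hmerge y, hG.symm⟩
  · exact ⟨x, v, hmerge x, by rw [hmerge_v]; ext; exact hy.symm, hx ▸ hvb.symm⟩

theorem TreeDecomp.exists_width_le_of_suppress (td : TreeDecomp (suppress G v a b))
    (hab : a ≠ b) (hdeg : G.neighborSet v = {a, b}) :
    ∃ td' : TreeDecomp G, td'.width ≤ max 2 td.width := by
  classical
  have hN := adj_iff_of_neighborSet_eq_pair hdeg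
  let a' : {x // x ≠ v} := ⟨a, ((hN a).2 (.inl rfl)).ne'⟩
  let b' : {x // x ≠ v} := ⟨b, ((hN b).2 (.inr rfl)).ne'⟩
  have hab' : (suppress G v a b).Adj a' b' := by
    rw [suppress, fromRel_adj]
    exact ⟨fun h => hab (congrArg Subtype.val h), .inl (.inr ⟨rfl, rfl⟩)⟩
  obtain ⟨i₀, ha, hb⟩ := td.cover_edge hab'
  have hs : {a', b'} ⊆ td.bag i₀ := Finset.insert_subset ha (Finset.singleton_subset_iff.2 hb)
  have hGH : ∀ x y : {x // x ≠ v}, G.Adj x y → (suppress G v a b).Adj x y := fun x y h => by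
    rw [suppress, fromRel_adj]
    exact ⟨fun hxy => h.ne (congrArg Subtype.val hxy), .inl (.inl h)⟩
  have hNs : ∀ x : {x // x ≠ v}, G.Adj v x → x ∈ ({a', b'} : Finset _) := fun x h => by
    rcases (hN x).1 h with h | h <;> simp [a', b', Subtype.ext_iff, h]
  refine ⟨td.addLeaf i₀ _ hs hGH hNs, (td.width_addLeaf_le i₀ _ hs hGH hNs).trans ?_⟩
  exact max_le_max_right _ Finset.card_le_two

end Suppress

theorem stmt19_general {V : Type} (G : SimpleGraph V) (v a b : V)
    (hab : a ≠ b) (hdeg : G.neighborSet v = {a, b}) (htw : 3 ≤ treewidth G) :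
    treewidth (suppress G v a b) = treewidth G := by
  have hva := (adj_iff_of_neighborSet_eq_pair hdeg a).2 (.inl rfl)
  have hvb := (adj_iff_of_neighborSet_eq_pair hdeg b).2 (.inr rfl)
  have : Nonempty (TreeDecomp G) := nonempty_treeDecomp_of_treewidth_ne_zero (by omega)
  obtain ⟨tdG, htdG⟩ := exists_width_eq_treewidth (G := G)
  obtain ⟨tdS, htdS⟩ := tdG.exists_width_le_suppress hva hvb
  have : Nonempty (TreeDecomp (suppress G v a b)) := ⟨tdS⟩
  obtain ⟨tdS', htdS'⟩ := exists_width_eq_treewidth (G := suppress G v a b)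
  obtain ⟨tdG', htdG'⟩ := tdS'.exists_width_le_of_suppress hab hdeg
  have hS_le := treewidth_le_width tdS
  have hG_le := treewidth_le_width tdG'
  omega

theorem stmt19 {V : Type} [Fintype V] (G : SimpleGraph V) (v a b : V)
    (hab : a ≠ b) (hdeg : G.neighborSet v = {a, b}) (htw : 3 ≤ treewidth G) :
    treewidth (suppress G v a b) = treewidth G :=
  stmt19_general G v a b hab hdeg htw
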